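/- Every 2-bounded rainbow-stable coloring f : [ℕ]² → ℕ is weakly rainbow-stable: for all x, y, either f(x,s) = f(y,s) for all but finitely many s, or f(x,s) ≠ f(y,s) for all but finitely many s. -/

import Mathlib

open Classical Filter

noncomputable section

variable {α β : Type*}

def IsTwoBounded (f : Sym2 α → β) : Prop :=
  ∀ c : β, {p : Sym2 α | ¬ p.IsDiag ∧ f p = c}.encard ≤ 2

namespace IsTwoBounded

variable {f : Sym2 α → β}

theorem false_of_three_eq (hf : IsTwoBounded f) {p q r : Sym2 α}
    (hp : ¬ p.IsDiag) (hq : ¬ q.IsDiag) (hr : ¬ r.IsDiag)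
    (hpq : p ≠ q) (hpr : p ≠ r) (hqr : q ≠ r) (hfq : f q = f p) (hfr : f r = f p) :
    False := by
  have hsub : {p, q, r} ⊆ {e : Sym2 α | ¬ e.IsDiag ∧ f e = f p} := by
    rintro e (rfl | rfl | rfl) <;> simp_all
  have hcard : ({p, q, r} : Set (Sym2 α)).encard = 3 :=
    Set.encard_eq_three.mpr ⟨p, q, r, hpq, hpr, hqr, rfl⟩
  have h3le2 := hcard ▸ (Set.encard_mono hsub).trans (hf (f p))
  norm_num at h3le2

theorem apply_ne_of_apply_eq (hf : IsTwoBounded f) {x y z s : α}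
    (hxy : x ≠ y) (hxz : x ≠ z) (hyz : y ≠ z) (hxs : x ≠ s) (hys : y ≠ s) (hzs : z ≠ s)
    (hfz : f s(x, s) = f s(z, s)) : f s(x, s) ≠ f s(y, s) := fun hfy =>
  hf.false_of_three_eq (Sym2.mk_isDiag_iff.not.mpr hxs) (Sym2.mk_isDiag_iff.not.mpr hys)
    (Sym2.mk_isDiag_iff.not.mpr hzs) (Sym2.congr_left.not.mpr hxy)
    (Sym2.congr_left.not.mpr hxz) (Sym2.congr_left.not.mpr hyz) hfy.symm hfz.symm

end IsTwoBounded

theorem stmt7 (f : Sym2 ℕ → ℕ)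
    (h2b : ∀ c : ℕ, {p : Sym2 ℕ | ¬ p.IsDiag ∧ f p = c}.encard ≤ 2)
    (hrs : ∀ x : ℕ,
      (∃ y : ℕ, y ≠ x ∧ ∀ᶠ s in atTop, f (Sym2.mk x s) = f (Sym2.mk y s)) ∨
      (∀ᶠ s in atTop, ∀ y : ℕ, y ≠ x → y ≠ s →
        f (Sym2.mk y s) ≠ f (Sym2.mk x s))) :
    ∀ x y : ℕ,
      (∀ᶠ s in atTop, f (Sym2.mk x s) = f (Sym2.mk y s)) ∨
      (∀ᶠ s in atTop, f (Sym2.mk x s) ≠ f (Sym2.mk y s)) := by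
  intro x y
  rcases eq_or_ne x y with rfl | hxy
  · exact Or.inl (Eventually.of_forall fun _ => rfl)
  rcases hrs x with ⟨z, hzx, hz⟩ | hrainbow
  · rcases eq_or_ne z y with rfl | hzy
    · exact Or.inl hz
    refine Or.inr ?_
    filter_upwards [hz, eventually_ne_atTop x, eventually_ne_atTop y, eventually_ne_atTop z]
      with s hs hsx hsy hsz
    exact IsTwoBounded.apply_ne_of_apply_eq h2b hxy hzx.symm hzy.symm hsx.symm hsy.symm
      hsz.symm hs
  · refine Or.inr ?_
    filter_upwards [hrainbow, eventually_ne_atTop y] with s hs hsy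
    exact fun h => hs y hxy.symm hsy.symm h.symm

end
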